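/- Let X be a nonempty set, W = W(X) the free monoid on X, and F = A × W the free right W-act with basis A. Let P and Q be subacts of F whose canonical bases B_P and B_Q are finite (i.e. P and Q have finite rank). Then P ∪ Q and P ∩ Q are subacts whose canonical bases B_{P∪Q} and B_{P∩Q} are also finite, and |B_P| + |B_Q| = |B_{P∪Q}| + |B_{P∩Q}|; that is, rk P + rk Q = rk(P ∪ Q) + rk(P ∩ Q). -/

import Mathlib

/-- A subset `P` of the free right act `F = A × W(X)` (with action `(a,w)·u = (a, w*u)`)
is a subact if it is closed under the action of the free monoid `W(X)`. -/
def IsSubact {A X : Type*} (P : Set (A × FreeMonoid X)) : Prop :=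
  ∀ p ∈ P, ∀ u : FreeMonoid X, (p.1, p.2 * u) ∈ P

/-- The canonical basis of a subact `P` of the free act `A × W(X)`. -/
def canonicalBasis {A X : Type*} (P : Set (A × FreeMonoid X)) : Set (A × FreeMonoid X) :=
  {p | p ∈ P ∧ (p.2 = 1 ∨
    ∃ (w : FreeMonoid X) (x : X), p.2 = w * FreeMonoid.of x ∧ (p.1, w) ∉ P)}

/-!
A point `(a, w x)` with `x ∈ X` lies in the canonical basis of `R` exactly when it lies
in `R` but its parent `(a, w)` does not; so `B_R = R \ R'`, where `R'` consists of the one-letter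
extensions of the points of `R`. Since a nonempty word has a unique last letter, `R ↦ R'` commutes
with unions and intersections, and `R' ⊆ R` for a subact. For sets `S ⊆ P`, `T ⊆ Q` the differences
`(P ∪ Q) \ (S ∪ T)` and `(P ∩ Q) \ (S ∩ T)` have the same union and the same intersection as
`P \ S` and `Q \ T`, which gives the rank formula by inclusion–exclusion.
-/

namespace FreeMonoid

variable {X : Type*}

lemma eq_one_or_exists_eq_mul_of (m : FreeMonoid X) :
    m = 1 ∨ ∃ (w : FreeMonoid X) (x : X), m = w * of x := by
  rcases List.eq_nil_or_concat m.toList with h | ⟨w, x, h⟩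
  · exact Or.inl (toList.injective h)
  · exact Or.inr ⟨ofList w, x, toList.injective (by simpa using h)⟩

lemma mul_of_inj {w w' : FreeMonoid X} {x x' : X} :
    w * of x = w' * of x' ↔ w = w' ∧ x = x' := by
  rw [← toList.injective.eq_iff, toList_mul, toList_mul, toList_of, toList_of,
    List.append_singleton_inj, toList.injective.eq_iff]

lemma mul_of_ne_one (w : FreeMonoid X) (x : X) : w * of x ≠ 1 := by
  rw [Ne, ← length_eq_zero, length_mul, length_of]
  omega

end FreeMonoid

namespace Set

variable {α : Type*} {P Q S T : Set α}

lemma diff_union_diff_eq_union_diff_union_union_inter_diff_inter (hS : S ⊆ P) (hT : T ⊆ Q) :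
    (P \ S) ∪ (Q \ T) = ((P ∪ Q) \ (S ∪ T)) ∪ ((P ∩ Q) \ (S ∩ T)) := by
  ext p
  have hSp : p ∈ S → p ∈ P := @hS p
  have hTp : p ∈ T → p ∈ Q := @hT p
  simp only [mem_union, mem_sdiff, mem_inter_iff]
  tauto

lemma diff_inter_diff_eq_union_diff_union_inter_inter_diff_inter :
    (P \ S) ∩ (Q \ T) = ((P ∪ Q) \ (S ∪ T)) ∩ ((P ∩ Q) \ (S ∩ T)) := by
  ext p
  simp only [mem_union, mem_sdiff, mem_inter_iff]
  tauto

lemma ncard_diff_add_ncard_diff (hS : S ⊆ P) (hT : T ⊆ Q)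
    (hPS : (P \ S).Finite) (hQT : (Q \ T).Finite) :
    ((P ∪ Q) \ (S ∪ T)).Finite ∧ ((P ∩ Q) \ (S ∩ T)).Finite ∧
      (P \ S).ncard + (Q \ T).ncard =
        ((P ∪ Q) \ (S ∪ T)).ncard + ((P ∩ Q) \ (S ∩ T)).ncard := by
  have hunion := diff_union_diff_eq_union_diff_union_union_inter_diff_inter hS hT
  have hfin : (((P ∪ Q) \ (S ∪ T)) ∪ ((P ∩ Q) \ (S ∩ T))).Finite :=
    hunion ▸ hPS.union hQT
  have hfin₁ := hfin.subset subset_union_left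
  have hfin₂ := hfin.subset subset_union_right
  refine ⟨hfin₁, hfin₂, ?_⟩
  rw [← ncard_union_add_ncard_inter _ _ hPS hQT, ← ncard_union_add_ncard_inter _ _ hfin₁ hfin₂,
    hunion, diff_inter_diff_eq_union_diff_union_inter_inter_diff_inter]

end Set

section Subact

variable {A X : Type*} {P Q R : Set (A × FreeMonoid X)}

def extendByLetter (R : Set (A × FreeMonoid X)) : Set (A × FreeMonoid X) :=
  {p | ∃ (w : FreeMonoid X) (x : X), p.2 = w * FreeMonoid.of x ∧ (p.1, w) ∈ R}

lemma IsSubact.union (hP : IsSubact P) (hQ : IsSubact Q) : IsSubact (P ∪ Q) := by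
  rintro p (hp | hp) u
  · exact Or.inl (hP p hp u)
  · exact Or.inr (hQ p hp u)

lemma IsSubact.inter (hP : IsSubact P) (hQ : IsSubact Q) : IsSubact (P ∩ Q) :=
  fun p hp u => ⟨hP p hp.1 u, hQ p hp.2 u⟩

lemma IsSubact.extendByLetter_subset (hR : IsSubact R) : extendByLetter R ⊆ R := by
  rintro ⟨a, _⟩ ⟨w, x, rfl, hw⟩
  exact hR (a, w) hw (FreeMonoid.of x)

lemma extendByLetter_union : extendByLetter (P ∪ Q) = extendByLetter P ∪ extendByLetter Q := by
  ext p
  simp only [extendByLetter, Set.mem_ofPred_eq, Set.mem_union, and_or_left, exists_or]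

lemma extendByLetter_inter : extendByLetter (P ∩ Q) = extendByLetter P ∩ extendByLetter Q := by
  ext p
  constructor
  · rintro ⟨w, x, hp, hP, hQ⟩
    exact ⟨⟨w, x, hp, hP⟩, ⟨w, x, hp, hQ⟩⟩
  · rintro ⟨⟨w, x, hp, hP⟩, ⟨w', x', hp', hQ⟩⟩
    obtain ⟨rfl, -⟩ := FreeMonoid.mul_of_inj.1 (hp.symm.trans hp')
    exact ⟨w, x, hp, hP, hQ⟩

lemma canonicalBasis_eq_diff_extendByLetter (R : Set (A × FreeMonoid X)) :
    canonicalBasis R = R \ extendByLetter R := by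
  ext ⟨a, m⟩
  simp only [canonicalBasis, extendByLetter, Set.mem_ofPred_eq, Set.mem_sdiff, not_exists, not_and]
  refine and_congr_right fun _ => ⟨?_, fun h => ?_⟩
  · rintro (rfl | ⟨w, x, rfl, hw⟩) w' x' hm
    · exact absurd hm.symm (FreeMonoid.mul_of_ne_one w' x')
    · rwa [(FreeMonoid.mul_of_inj.1 hm).1] at hw
  · rcases m.eq_one_or_exists_eq_mul_of with rfl | ⟨w, x, rfl⟩
    · exact Or.inl rfl
    · exact Or.inr ⟨w, x, rfl, h w x rfl⟩

end Subact

theorem rank_union_inter_subacts_general {A X : Type*}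
    (P Q : Set (A × FreeMonoid X)) (hP : IsSubact P) (hQ : IsSubact Q)
    (hBP : (canonicalBasis P).Finite) (hBQ : (canonicalBasis Q).Finite) :
    IsSubact (P ∪ Q) ∧ IsSubact (P ∩ Q) ∧
    (canonicalBasis (P ∪ Q)).Finite ∧ (canonicalBasis (P ∩ Q)).Finite ∧
    (canonicalBasis P).ncard + (canonicalBasis Q).ncard =
      (canonicalBasis (P ∪ Q)).ncard + (canonicalBasis (P ∩ Q)).ncard := by
  refine ⟨hP.union hQ, hP.inter hQ, ?_⟩
  simp only [canonicalBasis_eq_diff_extendByLetter, extendByLetter_union,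
    extendByLetter_inter] at hBP hBQ ⊢
  exact Set.ncard_diff_add_ncard_diff hP.extendByLetter_subset hQ.extendByLetter_subset hBP hBQ

/-- Grassmann-type formula for subacts of finite rank of a free act over a free monoid:
`rk P + rk Q = rk (P ∪ Q) + rk (P ∩ Q)`, all ranks being finite. -/
theorem rank_union_inter_subacts {A X : Type*} [Nonempty X]
    (P Q : Set (A × FreeMonoid X)) (hP : IsSubact P) (hQ : IsSubact Q)
    (hBP : (canonicalBasis P).Finite) (hBQ : (canonicalBasis Q).Finite) :
    IsSubact (P ∪ Q) ∧ IsSubact (P ∩ Q) ∧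
    (canonicalBasis (P ∪ Q)).Finite ∧ (canonicalBasis (P ∩ Q)).Finite ∧
    (canonicalBasis P).ncard + (canonicalBasis Q).ncard =
      (canonicalBasis (P ∪ Q)).ncard + (canonicalBasis (P ∩ Q)).ncard :=
  rank_union_inter_subacts_general P Q hP hQ hBP hBQ
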